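/- Let u be a real C² function on ℝ^{4n} ≅ ℍⁿ and q ∈ ℝ^{4n}. Suppose there exist 𝓔 ∈ U_ℍ(n) and real numbers ν₀,…,ν_{n−1} such that 𝓔*·H_u(q)·𝓔 = diag(ν₀,…,ν_{n−1}), where H_u(q) is the quaternionic Hessian of u at q. Then the n-fold exterior power of the Baston operator satisfies (Δu(q))∧⋯∧(Δu(q)) = n!·(ν₀⋯ν_{n−1})·Ω_{2n}. (The number ν₀⋯ν_{n−1} equals the Moore determinant of the quaternionic Hessian, so (Δu)^n = n!·det(H_u)·Ω_{2n}.) -/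

import Mathlib

open scoped Quaternion
open Matrix Sum

noncomputable section

/-- The complex part `a` in the decomposition `q = a + b·j` of a quaternion. -/
def qa (q : ℍ[ℝ]) : ℂ := ⟨q.re, q.imI⟩

/-- The complex part `b` in the decomposition `q = a + b·j` of a quaternion. -/
def qb (q : ℍ[ℝ]) : ℂ := ⟨q.imJ, q.imK⟩

/-- Entrywise complex conjugation of a complex matrix. -/
def conjM {m k : Type*} (M : Matrix m k ℂ) : Matrix m k ℂ := M.map (starRingEnd ℂ)

/-- The embedding τ : M_ℍ(p,m) → M_ℂ(2p,2m), τ(a + b·j) = [[a, −b],[conj b, conj a]]. -/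
def tau {p m : ℕ} (M : Matrix (Fin p) (Fin m) ℍ[ℝ]) :
    Matrix (Fin p ⊕ Fin p) (Fin m ⊕ Fin m) ℂ :=
  Matrix.fromBlocks (M.map qa) (-(M.map qb)) (conjM (M.map qb)) (conjM (M.map qa))

/-- The standard symplectic matrix J = [[0, Iₙ],[−Iₙ, 0]]. -/
def Jmat (n : ℕ) : Matrix (Fin n ⊕ Fin n) (Fin n ⊕ Fin n) ℂ :=
  Matrix.fromBlocks 0 1 (-1) 0

/-- index set {0,…,2n−1}, as two blocks. -/
abbrev Idx (n : ℕ) := Fin n ⊕ Fin n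

/-- ℂ^{2n}. -/
abbrev Vc (n : ℕ) := Idx n → ℂ

/-- The exterior algebra of ℂ^{2n}. -/
abbrev EA (n : ℕ) := ExteriorAlgebra ℂ (Vc n)

/-- Basis 1-vectors ω^A of the exterior algebra. -/
def ω {n : ℕ} (A : Idx n) : EA n := ExteriorAlgebra.ι ℂ (Pi.single A 1)

/-- Ω_{2n} = ω⁰∧ω^n∧ω¹∧ω^{n+1}∧…∧ω^{n−1}∧ω^{2n−1}. -/
def Ωn (n : ℕ) : EA n := (List.ofFn fun l : Fin n => ω (inl l) * ω (inr l)).prod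

/-- β_n = Σ_l ω^l∧ω^{n+l}. -/
def βn (n : ℕ) : EA n := ∑ l : Fin n, ω (inl l) * ω (inr l)

/-- Induced action of a 2n×2n complex matrix on the exterior algebra,
determined by N.ω^A = Σ_B N_{AB} ω^B. -/
def actE {n : ℕ} (N : Matrix (Idx n) (Idx n) ℂ) : EA n →ₐ[ℂ] EA n :=
  ExteriorAlgebra.map (Matrix.mulVecLin Nᵀ)

/-- ℝ^{4n}. -/
abbrev V4 (n : ℕ) := Fin (4 * n) → ℝ

/-- The coordinate index 4l+β. -/
def X {n : ℕ} (l : Fin n) (β : Fin 4) : Fin (4 * n) :=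
  ⟨4 * l.val + β.val, by have h1 := l.isLt; have h2 := β.isLt; omega⟩

/-- Partial derivative of a complex-valued function on ℝ^{4n}. -/
def pd {n : ℕ} (a : Fin (4 * n)) (f : V4 n → ℂ) : V4 n → ℂ :=
  fun q => fderiv ℝ f q (Pi.single a 1)

/-- The operators ∇_{Aα}, α = 0' (α=0) or 1' (α=1). -/
def nabla {n : ℕ} (A : Idx n) (α : Fin 2) (f : V4 n → ℂ) : V4 n → ℂ :=
  fun q =>
    match A with
    | Sum.inl l =>
        if α = 0 then pd (X l 0) f q + Complex.I * pd (X l 1) f q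
        else -pd (X l 2) f q - Complex.I * pd (X l 3) f q
    | Sum.inr l =>
        if α = 0 then pd (X l 2) f q - Complex.I * pd (X l 3) f q
        else pd (X l 0) f q - Complex.I * pd (X l 1) f q

/-- ∇_{Aα} applied to a real-valued function. -/
def nablaR {n : ℕ} (A : Idx n) (α : Fin 2) (u : V4 n → ℝ) : V4 n → ℂ :=
  nabla A α (fun x => ((u x : ℝ) : ℂ))

/-- Δ_{AB}u = ½(∇_{A0'}∇_{B1'}u − ∇_{B0'}∇_{A1'}u). -/
def Delta {n : ℕ} (A B : Idx n) (u : V4 n → ℝ) : V4 n → ℂ :=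
  fun q => (1 / 2 : ℂ) *
    (nabla A 0 (nabla B 1 (fun x => ((u x : ℝ) : ℂ))) q
      - nabla B 0 (nabla A 1 (fun x => ((u x : ℝ) : ℂ))) q)

/-- The Baston operator Δu = Σ_{A,B} Δ_{AB}u · ω^A∧ω^B. -/
def Baston {n : ℕ} (u : V4 n → ℝ) (q : V4 n) : EA n :=
  ∑ A : Idx n, ∑ B : Idx n, Delta A B u q • (ω A * ω B)

/-- The quaternion units. -/
def iH : ℍ[ℝ] := ⟨0, 1, 0, 0⟩
def jH : ℍ[ℝ] := ⟨0, 0, 1, 0⟩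
def kH : ℍ[ℝ] := ⟨0, 0, 0, 1⟩

/-- Partial derivative of a quaternion-valued function on ℝ^{4n}. -/
def pdH {n : ℕ} (a : Fin (4 * n)) (f : V4 n → ℍ[ℝ]) : V4 n → ℍ[ℝ] :=
  fun q => fderiv ℝ f q (Pi.single a 1)

/-- Partial derivative of a real-valued function on ℝ^{4n}. -/
def pdR {n : ℕ} (a : Fin (4 * n)) (f : V4 n → ℝ) : V4 n → ℝ :=
  fun q => fderiv ℝ f q (Pi.single a 1)

/-- ∂u/∂q_k = (∂_{x_{4k}} − i∂_{x_{4k+1}} − j∂_{x_{4k+2}} − k∂_{x_{4k+3}})u for real u. -/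
def dq {n : ℕ} (k : Fin n) (u : V4 n → ℝ) : V4 n → ℍ[ℝ] :=
  fun q => ⟨pdR (X k 0) u q, -pdR (X k 1) u q, -pdR (X k 2) u q, -pdR (X k 3) u q⟩

/-- ∂/∂q̄_l = ∂_{x_{4l}} + i∂_{x_{4l+1}} + j∂_{x_{4l+2}} + k∂_{x_{4l+3}} on ℍ-valued functions. -/
def dqbar {n : ℕ} (l : Fin n) (f : V4 n → ℍ[ℝ]) : V4 n → ℍ[ℝ] :=
  fun q => pdH (X l 0) f q + iH * pdH (X l 1) f q + jH * pdH (X l 2) f q + kH * pdH (X l 3) f q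

/-- The quaternionic Hessian of a real function u. -/
def Hess {n : ℕ} (u : V4 n → ℝ) (q : V4 n) : Matrix (Fin n) (Fin n) ℍ[ℝ] :=
  Matrix.of fun l k => dqbar l (dq k u) q

/-- ω^I = ω^{i₁}∧…∧ω^{i_p} for a multi-index I. -/
def ωProd {n p : ℕ} (I : Fin p → Idx n) : EA n :=
  (List.ofFn fun j => ω (I j)).prod

/-- The Λ^pℂ^{2n}-valued function with coefficient functions f: F = Σ_I f_I ω^I. -/
def formVal {n p : ℕ} (f : (Fin p → Idx n) → V4 n → ℂ) (q : V4 n) : EA n :=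
  ∑ I : Fin p → Idx n, f I q • ωProd I

/-- Coefficients of d_α F for F with coefficients f:
d_αF = Σ_{A,I} ∇_{Aα}f_I · ω^A∧ω^I. -/
def dcoef {n p : ℕ} (α : Fin 2) (f : (Fin p → Idx n) → V4 n → ℂ) :
    (Fin (p + 1) → Idx n) → V4 n → ℂ :=
  fun J => nabla (J 0) α (f (Fin.tail J))

/-- Coefficients of the wedge product F∧G. -/
def wedgeCoef {n p q : ℕ} (f : (Fin p → Idx n) → V4 n → ℂ)
    (g : (Fin q → Idx n) → V4 n → ℂ) : (Fin (p + q) → Idx n) → V4 n → ℂ :=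
  fun J x => f (fun i => J (Fin.castAdd q i)) x * g (fun i => J (Fin.natAdd p i)) x

/-- The complex coordinate functions z^{Aα}. -/
def zc {n : ℕ} (A : Idx n) (α : Fin 2) : V4 n → ℂ :=
  fun x =>
    match A with
    | Sum.inl l => if α = 0 then ⟨x (X l 0), -x (X l 1)⟩ else ⟨-x (X l 2), x (X l 3)⟩
    | Sum.inr l => if α = 0 then ⟨x (X l 2), x (X l 3)⟩ else ⟨x (X l 0), x (X l 1)⟩

/-- The quaternionic vector associated to a point of ℝ^{4n}. -/
def quatv {n : ℕ} (v : V4 n) : Fin n → ℍ[ℝ] :=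
  fun l => ⟨v (X l 0), v (X l 1), v (X l 2), v (X l 3)⟩

/-- The four real components of a quaternion. -/
def comp4 (q : ℍ[ℝ]) : Fin 4 → ℝ := ![q.re, q.imI, q.imJ, q.imK]

/-- The real-linear action of a quaternionic matrix 𝓤 on ℝ^{4n} ≅ ℍⁿ, q ↦ 𝓤q. -/
def act {n : ℕ} (U : Matrix (Fin n) (Fin n) ℍ[ℝ]) (v : V4 n) : V4 n :=
  fun a => comp4 ((U *ᵥ quatv v) ⟨a.val / 4, by have := a.isLt; omega⟩)
    ⟨a.val % 4, by omega⟩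

/-!
Under the embedding `τ` of quaternionic into complex matrices, the coefficient matrix `(Δ_{AB}u)`
of the Baston operator is `½ τ(H_u) J`; this is a direct computation from the definitions, using
the symmetry of second derivatives. Since `τ(𝓔*) J = J τ(𝓔)ᵀ`, writing `H_u = 𝓔 D 𝓔*` with
`D = diag(ν)` gives `½ τ(H_u) J = τ(𝓔) (½ τ(D) J) τ(𝓔)ᵀ`, so `Δu` is the image of
`Σ_l ν_l ω^l∧ω^{n+l}` under the algebra automorphism of `Λℂ^{2n}` induced by `τ(𝓔)ᵀ`.
The 2-vectors `ω^l∧ω^{n+l}` commute and square to zero, so the `n`-th power of that sum is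
`n! ν₀⋯ν_{n−1} Ω_{2n}`. Finally `τ(𝓔)` is symplectic, so the automorphism fixes
`β_n = Σ_l ω^l∧ω^{n+l}`, hence also `Ω_{2n} = β_n^n / n!`.
-/

open Finset ExteriorAlgebra

theorem Commute.add_pow_succ_of_mul_self_eq_zero {R : Type*} [Semiring R] {a b : R}
    (h : Commute a b) (ha : a * a = 0) (k : ℕ) :
    (a + b) ^ (k + 1) = b ^ (k + 1) + (k + 1) • (a * b ^ k) := by
  induction k with
  | zero => simp [add_comm]
  | succ k ih =>
    have hba : b ^ (k + 1) * a = a * b ^ (k + 1) := (h.pow_right (k + 1)).eq.symm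
    have haba : a * b ^ k * a = 0 := by
      rw [mul_assoc, ← (h.pow_right k).eq, ← mul_assoc, ha, zero_mul]
    rw [pow_succ, ih, add_mul, mul_add, mul_add, hba, smul_mul_assoc, smul_mul_assoc, haba,
      smul_zero, zero_add, ← pow_succ, mul_assoc, ← pow_succ, succ_nsmul _ (k + 1)]
    abel

theorem List.mul_prod_eq_zero_of_mem {R : Type*} [Semiring R] {z : R} (hz : z * z = 0)
    {L : List R} (hc : ∀ w ∈ L, Commute z w) (hm : z ∈ L) : z * L.prod = 0 := by
  induction L with
  | nil => simp at hm
  | cons a t ih =>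
    rw [List.prod_cons, ← mul_assoc]
    rcases List.mem_cons.mp hm with rfl | h
    · rw [hz, zero_mul]
    · rw [(hc a List.mem_cons_self).eq, mul_assoc,
        ih (fun w hw => hc w (List.mem_cons_of_mem a hw)) h, mul_zero]

theorem sum_pow_eq_factorial_nsmul_prod_ofFn {R : Type*} [Semiring R] {m : ℕ} (y : Fin m → R)
    (hc : ∀ i j, Commute (y i) (y j)) (hy : ∀ i, y i * y i = 0) :
    (∑ i, y i) ^ m = m.factorial • (List.ofFn y).prod := by
  induction m with
  | zero => simp
  | succ m ih =>
    set S := ∑ i : Fin m, y i.succ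
    have hS : S ^ m = m.factorial • (List.ofFn fun i => y i.succ).prod :=
      ih _ (fun i j => hc _ _) (fun i => hy _)
    have hS_succ : S ^ (m + 1) = 0 := by
      rw [pow_succ', hS, mul_smul_comm, sum_mul,
        sum_eq_zero fun i _ => List.mul_prod_eq_zero_of_mem (hy i.succ)
          (fun w hw => by obtain ⟨j, rfl⟩ := List.mem_ofFn.mp hw; exact hc _ _)
          (List.mem_ofFn.mpr ⟨i, rfl⟩), smul_zero]
    have hcomm : Commute (y 0) S := Commute.sum_right _ _ _ fun i _ => hc 0 i.succ
    rw [Fin.sum_univ_succ, hcomm.add_pow_succ_of_mul_self_eq_zero (hy 0), hS_succ, hS,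
      List.ofFn_succ, List.prod_cons, mul_smul_comm, smul_smul, zero_add, Nat.factorial_succ]

theorem List.prod_ofFn_smul {K A : Type*} [CommSemiring K] [Semiring A] [Algebra K A] {m : ℕ}
    (c : Fin m → K) (g : Fin m → A) :
    (List.ofFn fun i => c i • g i).prod = (∏ i, c i) • (List.ofFn g).prod := by
  induction m with
  | zero => simp
  | succ m ih =>
    rw [List.ofFn_succ, List.prod_cons, List.ofFn_succ (f := g), List.prod_cons, ih,
      Fin.prod_univ_succ, smul_mul_smul_comm]

namespace ExteriorAlgebra

variable {R M : Type*} [CommRing R] [AddCommGroup M] [Module R M]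

theorem ι_mul_ι_comm (x y : M) : ι R x * ι R y = -(ι R y * ι R x) :=
  eq_neg_of_add_eq_zero_left (ι_add_mul_swap x y)

theorem commute_ι_mul_ι_ι (x y z : M) : Commute (ι R x * ι R y) (ι R z) := by
  rw [Commute, SemiconjBy, mul_assoc, ι_mul_ι_comm y z, mul_neg, ← mul_assoc, ι_mul_ι_comm x z,
    neg_mul, neg_neg, mul_assoc]

theorem commute_ι_mul_ι (x y z w : M) : Commute (ι R x * ι R y) (ι R z * ι R w) :=
  (commute_ι_mul_ι_ι x y z).mul_right (commute_ι_mul_ι_ι x y w)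

theorem ι_mul_ι_mul_self (x y : M) : ι R x * ι R y * (ι R x * ι R y) = 0 := by
  rw [← mul_assoc, (commute_ι_mul_ι_ι x y x).eq, ← mul_assoc, ι_sq_zero, zero_mul, zero_mul]

end ExteriorAlgebra

section Quaternion

theorem qa_add (p q : ℍ[ℝ]) : qa (p + q) = qa p + qa q := by
  apply Complex.ext <;> simp [qa]

theorem qb_add (p q : ℍ[ℝ]) : qb (p + q) = qb p + qb q := by
  apply Complex.ext <;> simp [qb]

theorem qa_sum {ι : Type*} (s : Finset ι) (f : ι → ℍ[ℝ]) :
    qa (∑ i ∈ s, f i) = ∑ i ∈ s, qa (f i) :=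
  map_sum (AddMonoidHom.mk' qa qa_add) f s

theorem qb_sum {ι : Type*} (s : Finset ι) (f : ι → ℍ[ℝ]) :
    qb (∑ i ∈ s, f i) = ∑ i ∈ s, qb (f i) :=
  map_sum (AddMonoidHom.mk' qb qb_add) f s

theorem qa_coe (r : ℝ) : qa r = r := by
  apply Complex.ext <;> simp [qa]

theorem qb_coe (r : ℝ) : qb r = 0 := by
  apply Complex.ext <;> simp [qb]

theorem qa_zero : qa 0 = 0 := by simpa using qa_coe 0

theorem qb_zero : qb 0 = 0 := by simpa using qb_coe 0

theorem qa_star (p : ℍ[ℝ]) : qa (star p) = starRingEnd ℂ (qa p) := by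
  apply Complex.ext <;> simp [qa]

theorem qb_star (p : ℍ[ℝ]) : qb (star p) = -qb p := by
  apply Complex.ext <;> simp [qb]

theorem qa_mul (p q : ℍ[ℝ]) : qa (p * q) = qa p * qa q - qb p * starRingEnd ℂ (qb q) := by
  apply Complex.ext <;> simp [qa, qb, Quaternion.re_mul, Quaternion.imI_mul] <;> ring

theorem qb_mul (p q : ℍ[ℝ]) : qb (p * q) = qa p * qb q + qb p * starRingEnd ℂ (qa q) := by
  apply Complex.ext <;> simp [qa, qb, Quaternion.imJ_mul, Quaternion.imK_mul] <;> ring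

end Quaternion

section Tau

variable {ι κ μ : Type*} {p m r : ℕ}

theorem conjM_add (P Q : Matrix ι κ ℂ) : conjM (P + Q) = conjM P + conjM Q := by
  ext; simp [conjM]

theorem conjM_sub (P Q : Matrix ι κ ℂ) : conjM (P - Q) = conjM P - conjM Q := by
  ext; simp [conjM]

theorem conjM_conjM (P : Matrix ι κ ℂ) : conjM (conjM P) = P := by
  ext; simp [conjM]

theorem conjM_mul [Fintype κ] (P : Matrix ι κ ℂ) (Q : Matrix κ μ ℂ) :
    conjM (P * Q) = conjM P * conjM Q := by
  ext; simp [conjM, Matrix.mul_apply]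

theorem map_qa_mul (M : Matrix (Fin p) (Fin m) ℍ[ℝ]) (M' : Matrix (Fin m) (Fin r) ℍ[ℝ]) :
    (M * M').map qa = M.map qa * M'.map qa - M.map qb * conjM (M'.map qb) := by
  ext i j
  simp only [Matrix.map_apply, Matrix.sub_apply, Matrix.mul_apply, conjM, qa_sum, qa_mul, sum_sub_distrib]

theorem map_qb_mul (M : Matrix (Fin p) (Fin m) ℍ[ℝ]) (M' : Matrix (Fin m) (Fin r) ℍ[ℝ]) :
    (M * M').map qb = M.map qa * M'.map qb + M.map qb * conjM (M'.map qa) := by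
  ext i j
  simp only [Matrix.map_apply, Matrix.add_apply, Matrix.mul_apply, conjM, qb_sum, qb_mul, sum_add_distrib]

theorem tau_mul (M : Matrix (Fin p) (Fin m) ℍ[ℝ]) (M' : Matrix (Fin m) (Fin r) ℍ[ℝ]) :
    tau (M * M') = tau M * tau M' := by
  rw [tau, tau, tau, fromBlocks_multiply, map_qa_mul, map_qb_mul, fromBlocks_inj]
  refine ⟨?_, ?_, ?_, ?_⟩
  · rw [Matrix.neg_mul, sub_eq_add_neg]
  · rw [Matrix.mul_neg, Matrix.neg_mul, neg_add]
  · rw [conjM_add, conjM_mul, conjM_mul, conjM_conjM, add_comm]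
  · rw [conjM_sub, conjM_mul, conjM_mul, conjM_conjM, Matrix.mul_neg, sub_eq_neg_add, add_comm]

theorem tau_diagonal_coe (c : Fin m → ℝ) :
    tau (diagonal fun i => (c i : ℍ[ℝ])) =
      fromBlocks (diagonal fun i => (c i : ℂ)) 0 0 (diagonal fun i => (c i : ℂ)) := by
  ext (i | i) (j | j) <;> by_cases h : i = j <;> simp [tau, conjM, h, qa_coe, qb_coe, qa_zero, qb_zero]

theorem tau_one : tau (1 : Matrix (Fin m) (Fin m) ℍ[ℝ]) = 1 := by
  simpa [← diagonal_one] using tau_diagonal_coe (m := m) 1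

theorem mul_Jmat_apply_inl (C : Matrix ι (Idx m) ℂ) (a : ι) (b : Fin m) :
    (C * Jmat m) a (inl b) = -C a (inr b) := by
  simp [Jmat, Matrix.mul_apply, Fintype.sum_sum_type, one_apply]

theorem mul_Jmat_apply_inr (C : Matrix ι (Idx m) ℂ) (a : ι) (b : Fin m) :
    (C * Jmat m) a (inr b) = C a (inl b) := by
  simp [Jmat, Matrix.mul_apply, Fintype.sum_sum_type, one_apply]

theorem Jmat_mul_apply_inl (C : Matrix (Idx m) ι ℂ) (a : Fin m) (b : ι) :
    (Jmat m * C) (inl a) b = C (inr a) b := by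
  simp [Jmat, Matrix.mul_apply, Fintype.sum_sum_type, one_apply]

theorem Jmat_mul_apply_inr (C : Matrix (Idx m) ι ℂ) (a : Fin m) (b : ι) :
    (Jmat m * C) (inr a) b = -C (inl a) b := by
  simp [Jmat, Matrix.mul_apply, Fintype.sum_sum_type, one_apply]

theorem tau_conjTranspose_mul_Jmat (M : Matrix (Fin p) (Fin m) ℍ[ℝ]) :
    tau Mᴴ * Jmat p = Jmat m * (tau M)ᵀ := by
  ext (i | i) (j | j) <;>
    simp [mul_Jmat_apply_inl, mul_Jmat_apply_inr, Jmat_mul_apply_inl, Jmat_mul_apply_inr, tau,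
      conjM, qa_star, qb_star]

theorem tau_mul_Jmat_mul_tau_transpose {E : Matrix (Fin p) (Fin m) ℍ[ℝ]} (hE : E * Eᴴ = 1) :
    tau E * Jmat m * (tau E)ᵀ = Jmat p := by
  rw [Matrix.mul_assoc, ← tau_conjTranspose_mul_Jmat, ← Matrix.mul_assoc, ← tau_mul, hE, tau_one,
    Matrix.one_mul]

theorem tau_mul_mul_conjTranspose_mul_Jmat (E : Matrix (Fin p) (Fin m) ℍ[ℝ])
    (D : Matrix (Fin m) (Fin m) ℍ[ℝ]) :
    tau (E * D * Eᴴ) * Jmat p = tau E * (tau D * Jmat m) * (tau E)ᵀ := by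
  rw [tau_mul, Matrix.mul_assoc, tau_conjTranspose_mul_Jmat, tau_mul, Matrix.mul_assoc,
    Matrix.mul_assoc, Matrix.mul_assoc]

theorem fromBlocks_diagonal_mul_Jmat (c : Fin m → ℂ) :
    fromBlocks (diagonal c) 0 0 (diagonal c) * Jmat m =
      fromBlocks 0 (diagonal c) 0 0 - (fromBlocks 0 (diagonal c) 0 0)ᵀ := by
  rw [Jmat, fromBlocks_multiply, fromBlocks_transpose, sub_eq_add_neg, fromBlocks_neg,
    fromBlocks_add]
  simp

theorem Jmat_eq_sub_transpose : Jmat m = fromBlocks 0 1 0 0 - (fromBlocks 0 1 0 0)ᵀ := by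
  simpa using fromBlocks_diagonal_mul_Jmat (m := m) 1

end Tau

section Calculus

variable {E : Type*} [NormedAddCommGroup E] [NormedSpace ℝ E]

theorem ContinuousLinearMap.fderiv_comp_apply {F G : Type*} [NormedAddCommGroup F]
    [NormedSpace ℝ F] [NormedAddCommGroup G] [NormedSpace ℝ G] (L : F →L[ℝ] G) {f : E → F}
    {x : E} (hf : DifferentiableAt ℝ f x) (v : E) :
    fderiv ℝ (fun y => L (f y)) x v = L (fderiv ℝ f x v) := by
  rw [show (fun y => L (f y)) = L ∘ f from rfl, fderiv_comp x L.differentiableAt hf, L.fderiv]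
  rfl

theorem fderiv_quaternion_mk_apply {g₀ g₁ g₂ g₃ : E → ℝ} {x : E} (h₀ : DifferentiableAt ℝ g₀ x)
    (h₁ : DifferentiableAt ℝ g₁ x) (h₂ : DifferentiableAt ℝ g₂ x) (h₃ : DifferentiableAt ℝ g₃ x)
    (v : E) :
    fderiv ℝ (F := ℍ[ℝ]) (fun y => ⟨g₀ y, g₁ y, g₂ y, g₃ y⟩) x v =
      (⟨fderiv ℝ g₀ x v, fderiv ℝ g₁ x v, fderiv ℝ g₂ x v, fderiv ℝ g₃ x v⟩ : ℍ[ℝ]) := by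
  let e₀ : (Fin 4 → ℝ) ≃ₗ[ℝ] ℍ[ℝ] := (QuaternionAlgebra.linearEquivTuple _ _ _).symm
  let e := e₀.toContinuousLinearEquiv
  have he : (fun y => ⟨g₀ y, g₁ y, g₂ y, g₃ y⟩ : E → ℍ[ℝ]) =
      e ∘ fun y i => ![g₀, g₁, g₂, g₃] i y := rfl
  have hd : ∀ i, DifferentiableAt ℝ (![g₀, g₁, g₂, g₃] i) x := by
    intro i; fin_cases i <;> assumption
  rw [he, e.comp_fderiv, fderiv_pi hd]
  rfl

end Calculus

section Hessian

variable {n : ℕ}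

theorem pd_ofReal {g : V4 n → ℝ} (hg : Differentiable ℝ g) (a : Fin (4 * n)) :
    pd a (fun y => (g y : ℂ)) = fun x => (pdR a g x : ℂ) :=
  funext fun _ => Complex.ofRealCLM.fderiv_comp_apply (hg _) _

theorem pd_const_mul_ofReal_add {g g' : V4 n → ℝ} (hg : Differentiable ℝ g)
    (hg' : Differentiable ℝ g') (s t : ℂ) (a : Fin (4 * n)) (x : V4 n) :
    pd a (fun y => s * g y + t * g' y) x = s * pdR a g x + t * pdR a g' x := by
  have hc : ∀ {f : V4 n → ℝ}, Differentiable ℝ f → DifferentiableAt ℝ (fun y => (f y : ℂ)) x :=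
    fun hf => (Complex.ofRealCLM.differentiable.comp hf) x
  rw [pd, fderiv_fun_add ((hc hg).const_mul s) ((hc hg').const_mul t), fderiv_const_mul (hc hg),
    fderiv_const_mul (hc hg')]
  simp only [_root_.add_apply, _root_.smul_apply, smul_eq_mul]
  rw [← pd, ← pd, pd_ofReal hg, pd_ofReal hg']

variable {u : V4 n → ℝ} (hu : ContDiff ℝ 2 u)
include hu

theorem differentiable_pdR (b : Fin (4 * n)) : Differentiable ℝ (pdR b u) :=
  ((hu.fderiv_right (m := 1) le_rfl).differentiable one_ne_zero).clm_apply
    (differentiable_const _)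

theorem pdR_pdR_comm (q : V4 n) (a b : Fin (4 * n)) :
    pdR a (pdR b u) q = pdR b (pdR a u) q := by
  have hfd := (hu.fderiv_right (m := 1) le_rfl).differentiable one_ne_zero
  have h : ∀ a b, pdR a (pdR b u) q = fderiv ℝ (fderiv ℝ u) q (Pi.single a 1) (Pi.single b 1) := by
    intro a b
    unfold pdR
    rw [fderiv_clm_apply (hfd q) (differentiableAt_const _)]
    simp
  rw [h, h]
  exact hu.contDiffAt.isSymmSndFDerivAt (by simp) _ _

theorem pdH_dq (q : V4 n) (a : Fin (4 * n)) (k : Fin n) :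
    pdH a (dq k u) q = ⟨pdR a (pdR (X k 0) u) q, -pdR a (pdR (X k 1) u) q,
      -pdR a (pdR (X k 2) u) q, -pdR a (pdR (X k 3) u) q⟩ := by
  have hd := fun b => differentiable_pdR hu b q
  have h := fderiv_quaternion_mk_apply (hd (X k 0)) (hd (X k 1)).fun_neg (hd (X k 2)).fun_neg
    (hd (X k 3)).fun_neg (Pi.single a 1)
  simp only [fderiv_fun_neg, _root_.neg_apply] at h
  exact h

theorem Hess_apply (q : V4 n) (l k : Fin n) :
    Hess u q l k =
      ⟨pdR (X l 0) (pdR (X k 0) u) q + pdR (X l 1) (pdR (X k 1) u) q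
          + pdR (X l 2) (pdR (X k 2) u) q + pdR (X l 3) (pdR (X k 3) u) q,
        pdR (X l 1) (pdR (X k 0) u) q - pdR (X l 0) (pdR (X k 1) u) q
          + pdR (X l 3) (pdR (X k 2) u) q - pdR (X l 2) (pdR (X k 3) u) q,
        pdR (X l 2) (pdR (X k 0) u) q - pdR (X l 3) (pdR (X k 1) u) q
          - pdR (X l 0) (pdR (X k 2) u) q + pdR (X l 1) (pdR (X k 3) u) q,
        pdR (X l 3) (pdR (X k 0) u) q + pdR (X l 2) (pdR (X k 1) u) q
          - pdR (X l 1) (pdR (X k 2) u) q - pdR (X l 0) (pdR (X k 3) u) q⟩ := by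
  show dqbar l (dq k u) q = _
  unfold dqbar
  ext <;> simp only [Quaternion.re_add, Quaternion.imI_add, Quaternion.imJ_add,
    Quaternion.imK_add, Quaternion.re_mul, Quaternion.imI_mul, Quaternion.imJ_mul,
    Quaternion.imK_mul] <;> simp [pdH_dq hu, iH, jH, kH] <;> ring

end Hessian

section Bivector

variable {n : ℕ}

def bivector : Matrix (Idx n) (Idx n) ℂ →ₗ[ℂ] EA n where
  toFun C := ∑ A, ∑ B, C A B • (ω A * ω B)
  map_add' C C' := by simp only [Matrix.add_apply, add_smul, sum_add_distrib]
  map_smul' c C := by simp only [Matrix.smul_apply, smul_sum, smul_smul, smul_eq_mul, RingHom.id_apply]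

theorem bivector_apply (C : Matrix (Idx n) (Idx n) ℂ) :
    bivector C = ∑ A, ∑ B, C A B • (ω A * ω B) := rfl

theorem bivector_transpose (C : Matrix (Idx n) (Idx n) ℂ) : bivector Cᵀ = -bivector C := by
  rw [bivector_apply, sum_comm, bivector_apply, ← sum_neg_distrib]
  refine sum_congr rfl fun B _ => ?_
  rw [← sum_neg_distrib]
  refine sum_congr rfl fun A _ => ?_
  rw [transpose_apply, ω, ω, ι_mul_ι_comm, smul_neg]

theorem bivector_sub_transpose (C : Matrix (Idx n) (Idx n) ℂ) :
    bivector (C - Cᵀ) = (2 : ℂ) • bivector C := by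
  rw [map_sub, bivector_transpose, sub_neg_eq_add, two_smul]

theorem bivector_fromBlocks_diagonal (c : Fin n → ℂ) :
    bivector (fromBlocks 0 (diagonal c) 0 0) = ∑ l, c l • (ω (inl l) * ω (inr l)) := by
  simp [bivector_apply, Fintype.sum_sum_type, diagonal_apply, ite_smul]

theorem actE_ω (N : Matrix (Idx n) (Idx n) ℂ) (A : Idx n) :
    actE N (ω A) = ∑ B, N A B • ω B := by
  rw [actE, ω, map_apply_ι]
  simp only [ω, ← map_smul, ← map_sum]
  congr 1
  ext B
  simp [Finset.sum_apply, Pi.single_apply]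

theorem actE_transpose_bivector (N C : Matrix (Idx n) (Idx n) ℂ) :
    actE Nᵀ (bivector C) = bivector (N * C * Nᵀ) := by
  simp only [bivector_apply, map_sum, map_smul, map_mul, actE_ω, sum_mul, mul_sum, smul_sum,
    smul_mul_assoc, mul_smul_comm, smul_smul, Matrix.mul_apply, transpose_apply, sum_smul]
  conv_lhs => enter [2, A, 2, B]; rw [sum_comm]
  conv_lhs => rw [sum_comm_cycle]; enter [2, C']; rw [sum_comm_cycle]; enter [2, D]; rw [sum_comm]
  refine sum_congr rfl fun C' _ => sum_congr rfl fun D _ => sum_congr rfl fun B _ =>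
    sum_congr rfl fun A _ => ?_
  congr 1
  ring

theorem sum_smul_ω_mul_ω_pow (c : Fin n → ℂ) :
    (∑ l, c l • (ω (inl l) * ω (inr l))) ^ n = n.factorial • ((∏ l, c l) • Ωn n) := by
  rw [sum_pow_eq_factorial_nsmul_prod_ofFn, List.prod_ofFn_smul, Ωn]
  · exact fun i j => ((commute_ι_mul_ι _ _ _ _).smul_left _).smul_right _
  · exact fun i => by rw [smul_mul_smul_comm, ω, ω, ι_mul_ι_mul_self, smul_zero]

theorem βn_pow : βn n ^ n = n.factorial • Ωn n := by
  simpa [βn] using sum_smul_ω_mul_ω_pow (n := n) 1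

theorem actE_transpose_βn {N : Matrix (Idx n) (Idx n) ℂ} (hN : N * Jmat n * Nᵀ = Jmat n) :
    actE Nᵀ (βn n) = βn n := by
  have hβ : βn n = bivector (fromBlocks 0 1 0 0) := by
    simpa [βn] using (bivector_fromBlocks_diagonal (n := n) 1).symm
  have h2 : (2 : ℂ) • actE Nᵀ (βn n) = (2 : ℂ) • βn n := by
    rw [← map_smul, hβ, ← bivector_sub_transpose, ← Jmat_eq_sub_transpose,
      actE_transpose_bivector, hN, Jmat_eq_sub_transpose]
  exact smul_right_injective _ two_ne_zero h2

theorem actE_transpose_Ωn {N : Matrix (Idx n) (Idx n) ℂ} (hN : N * Jmat n * Nᵀ = Jmat n) :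
    actE Nᵀ (Ωn n) = Ωn n := by
  have h : (n.factorial : ℂ) • actE Nᵀ (Ωn n) = (n.factorial : ℂ) • Ωn n := by
    rw [Nat.cast_smul_eq_nsmul, Nat.cast_smul_eq_nsmul, ← map_nsmul, ← βn_pow, map_pow,
      actE_transpose_βn hN]
  exact smul_right_injective _ (Nat.cast_ne_zero.mpr n.factorial_ne_zero) h

end Bivector

section Baston

variable {n : ℕ} {u : V4 n → ℝ} (hu : ContDiff ℝ 2 u)
include hu

theorem nabla_inl_one_ofReal (k : Fin n) :
    nabla (inl k) 1 (fun x => (u x : ℂ)) =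
      fun y => -1 * (pdR (X k 2) u y : ℂ) + -Complex.I * (pdR (X k 3) u y : ℂ) := by
  funext y
  simp [nabla, pd_ofReal (hu.differentiable two_ne_zero)]
  ring

theorem nabla_inr_one_ofReal (k : Fin n) :
    nabla (inr k) 1 (fun x => (u x : ℂ)) =
      fun y => 1 * (pdR (X k 0) u y : ℂ) + -Complex.I * (pdR (X k 1) u y : ℂ) := by
  funext y
  simp [nabla, pd_ofReal (hu.differentiable two_ne_zero)]
  ring

theorem Delta_eq_half_tau_Hess_mul_Jmat (q : V4 n) (A B : Idx n) :
    Delta A B u q = (1 / 2 : ℂ) * (tau (Hess u q) * Jmat n) A B := by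
  have hd := differentiable_pdR hu
  -- the second term of `Δ_{AB}` differentiates in the order opposite to that of `H_u`
  rcases A with l | l <;> rcases B with k | k <;>
    simp only [Delta, nabla_inl_one_ofReal hu, nabla_inr_one_ofReal hu, nabla,
      pd_const_mul_ofReal_add (hd _) (hd _), mul_Jmat_apply_inl, mul_Jmat_apply_inr, tau,
      fromBlocks_apply₁₁, fromBlocks_apply₁₂, fromBlocks_apply₂₁, fromBlocks_apply₂₂,
      Matrix.map_apply, conjM, Matrix.neg_apply, Hess_apply hu, pdR_pdR_comm hu q (X k _) (X l _), if_true] <;>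
    apply Complex.ext <;> simp [qa, qb] <;> ring

theorem Baston_eq_bivector (q : V4 n) :
    Baston u q = bivector ((1 / 2 : ℂ) • (tau (Hess u q) * Jmat n)) := by
  simp only [Baston, bivector_apply, Matrix.smul_apply, smul_eq_mul, Delta_eq_half_tau_Hess_mul_Jmat hu]

theorem Baston_eq_actE (q : V4 n) {E : Matrix (Fin n) (Fin n) ℍ[ℝ]} (hE : E * Eᴴ = 1)
    {ν : Fin n → ℝ} (hdiag : Eᴴ * Hess u q * E = diagonal fun i => (ν i : ℍ[ℝ])) :
    Baston u q = actE (tau E)ᵀ (∑ l, (ν l : ℂ) • (ω (inl l) * ω (inr l))) := by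
  have hH : Hess u q = E * diagonal (fun i => (ν i : ℍ[ℝ])) * Eᴴ := by
    rw [← hdiag, ← Matrix.mul_assoc, ← Matrix.mul_assoc, hE, Matrix.one_mul, Matrix.mul_assoc, hE,
      Matrix.mul_one]
  rw [Baston_eq_bivector hu, hH, tau_mul_mul_conjTranspose_mul_Jmat, tau_diagonal_coe,
    fromBlocks_diagonal_mul_Jmat, map_smul, ← actE_transpose_bivector, bivector_sub_transpose,
    bivector_fromBlocks_diagonal, map_smul, smul_smul]
  norm_num

end Baston

theorem stmt_11_general {n : ℕ} (u : V4 n → ℝ) (hu : ContDiff ℝ 2 u) (q : V4 n)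
    (E : Matrix (Fin n) (Fin n) ℍ[ℝ]) (hE2 : E * Eᴴ = 1)
    (ν : Fin n → ℝ)
    (hdiag : Eᴴ * Hess u q * E = Matrix.diagonal (fun i => ((ν i : ℝ) : ℍ[ℝ]))) :
    (Baston u q) ^ n = ((n.factorial : ℂ) * (((∏ i, ν i : ℝ) : ℝ) : ℂ)) • Ωn n := by
  rw [Baston_eq_actE hu q hE2 hdiag, ← map_pow, sum_smul_ω_mul_ω_pow, map_nsmul, map_smul,
    actE_transpose_Ωn (tau_mul_Jmat_mul_tau_transpose hE2), ← Nat.cast_smul_eq_nsmul ℂ,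
    smul_smul, Complex.ofReal_prod]

/-- if 𝓔*·H_u(q)·𝓔 = diag(ν₀,…,ν_{n−1}) with 𝓔 quaternionic unitary,
then (Δu(q))^∧n = n!·(ν₀⋯ν_{n−1})·Ω_{2n}. -/
theorem stmt_11 {n : ℕ} (u : V4 n → ℝ) (hu : ContDiff ℝ 2 u) (q : V4 n)
    (E : Matrix (Fin n) (Fin n) ℍ[ℝ]) (hE1 : Eᴴ * E = 1) (hE2 : E * Eᴴ = 1)
    (ν : Fin n → ℝ)
    (hdiag : Eᴴ * Hess u q * E = Matrix.diagonal (fun i => ((ν i : ℝ) : ℍ[ℝ]))) :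
    (Baston u q) ^ n = ((n.factorial : ℂ) * (((∏ i, ν i : ℝ) : ℝ) : ℂ)) • Ωn n :=
  stmt_11_general u hu q E hE2 ν hdiag

end
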